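/- Let A be a nonzero polynomial in finitely many commuting variables v_i^{(j)} (1 ≤ i ≤ N, j ≥ 0) all of whose monomials have total degree ≥ 2, and let ∂ₓ be the derivation with ∂ₓ v_i^{(j)} = v_i^{(j+1)}. Then the expression C := Σ_{i,k=1}^{N} Σ_{j,l≥0} (∂²A/∂v_i^{(j)}∂v_k^{(l)}) v_{i+1}^{(j+1)} v_{k+1}^{(l+1)} - Σ_{k=1}^{N} Σ_{l≥0} ∂ₓ(∂A/∂v_k^{(l)}) v_{k+2}^{(l+1)} is nonzero. (Here indices i+1, k+1, k+2 range over new variables as needed.) -/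

import Mathlib

open MvPolynomial

/-- The polynomial ring `ℂ[v_i^{(j)}]` in commuting variables `v_i^{(j)}` indexed by
pairs `(i,j)`. -/
noncomputable abbrev VRing : Type := MvPolynomial (ℕ × ℕ) ℂ

/-- The variable `v_i^{(j)}`. -/
noncomputable def vv (i j : ℕ) : VRing := X (i, j)

/-- The derivation `∂ₓ` with `∂ₓ v_i^{(j)} = v_i^{(j+1)}`. -/
noncomputable def Dv : Derivation ℂ VRing VRing :=
  MvPolynomial.mkDerivation ℂ (fun p : ℕ × ℕ => X (p.1, p.2 + 1))

/-- The total degree of a monomial. -/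
def mdeg (m : (ℕ × ℕ) →₀ ℕ) : ℕ := ∑ x ∈ m.support, m x

/-!
Let `k₀` be the largest first index of a variable `v_{k₀}^{(l₀)}` occurring in `A`, and
differentiate `C` with respect to `v_{k₀+2}^{(l₀+1)}`. No second derivative of `A` involves that
variable, and the factors `v_{i+1}^{(j+1)} v_{k+1}^{(l+1)}` can only equal it when the coefficient
in front of them vanishes, so the first sum contributes nothing; the second sum contributes
exactly `-∂ₓ(∂A/∂v_{k₀}^{(l₀)})`. This is nonzero because `∂A/∂v_{k₀}^{(l₀)}` is a nonzero
polynomial without constant term (all monomials of `A` have degree `≥ 2`), and `∂ₓ` is injective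
on such polynomials.
-/

namespace MvPolynomial

variable {R σ ι : Type*}

section CommSemiring

variable [CommSemiring R]

theorem coeff_eq_zero_of_degree_lt {p : MvPolynomial σ R} {n : ℕ}
    (hp : ∀ m ∈ p.support, n ≤ m.degree) {m : σ →₀ ℕ} (hm : m.degree < n) : coeff m p = 0 :=
  notMem_support_iff.mp fun h => (hp m h).not_gt hm

theorem coeff_zero_pderiv (i : σ) (p : MvPolynomial σ R) :
    coeff 0 (pderiv i p) = coeff (Finsupp.single i 1) p := by
  simp [coeff_pderiv p 0]

theorem vars_nonempty_of_coeff_zero {p : MvPolynomial σ R} (hp : p ≠ 0) (h0 : coeff 0 p = 0) :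
    p.vars.Nonempty := by
  rwa [Finset.nonempty_iff_ne_empty, Ne, vars_eq_empty_iff_eq_C, h0, C_0]

theorem pderiv_ne_zero_of_mem_vars [NoZeroDivisors R] [CharZero R] {i : σ}
    {p : MvPolynomial σ R} (h : i ∈ p.vars) : pderiv i p ≠ 0 := by
  obtain ⟨m, hm, hmi⟩ := (mem_vars_iff_mem_support i).mp h
  have hle : Finsupp.single i 1 ≤ m :=
    Finsupp.single_le_iff.mpr (Nat.one_le_iff_ne_zero.mpr (Finsupp.mem_support_iff.mp hmi))
  intro h0
  have hcoeff := coeff_pderiv (i := i) p (m - Finsupp.single i 1)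
  rw [h0, coeff_zero, tsub_add_cancel_of_le hle, eq_comm, mul_eq_zero] at hcoeff
  exact hcoeff.elim (mem_support_iff.mp hm) (Nat.cast_add_one_ne_zero _)

theorem finite_support_pderiv_mk {α β : Type*} (p : MvPolynomial (α × β) R) (a : α) :
    (Function.support fun b => pderiv (a, b) p).Finite :=
  (p.vars.finite_toSet.preimage (Prod.mk_right_injective a).injOn).subset fun _ hb =>
    not_imp_comm.mp pderiv_eq_zero_of_notMem_vars hb

noncomputable def totalDeriv (R ι : Type*) [CommSemiring R] :
    Derivation R (MvPolynomial (ι × ℕ) R) (MvPolynomial (ι × ℕ) R) :=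
  mkDerivation R fun p => X (p.1, p.2 + 1)

theorem totalDeriv_X (p : ι × ℕ) : totalDeriv R ι (X p) = X (p.1, p.2 + 1) :=
  mkDerivation_X R _ p

theorem pderiv_comm (i j : σ) (p : MvPolynomial σ R) :
    pderiv i (pderiv j p) = pderiv j (pderiv i p) := by
  classical
  induction p using MvPolynomial.induction_on with
  | C a => simp
  | add p q hp hq => simp [hp, hq]
  | mul_X p n ih =>
    simp only [pderiv_mul, map_add, ih, pderiv_X, Pi.single_apply]
    split_ifs <;> simp [add_right_comm]

theorem pderiv_totalDeriv (a : ι) (b : ℕ) (f : MvPolynomial (ι × ℕ) R) :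
    pderiv (a, b + 1) (totalDeriv R ι f) =
      totalDeriv R ι (pderiv (a, b + 1) f) + pderiv (a, b) f := by
  classical
  induction f using MvPolynomial.induction_on with
  | C c => simp [totalDeriv]
  | add p q hp hq => simp only [map_add, hp, hq]; ring
  | mul_X p n ih =>
    obtain ⟨c, d⟩ := n
    simp only [Derivation.leibniz, map_add, ih, pderiv_X, totalDeriv_X,
      Pi.single_apply, smul_eq_mul, Prod.mk.injEq, add_left_inj]
    split_ifs <;> simp only [map_zero, Derivation.map_one_eq_zero, mul_zero, add_zero] <;> ring

theorem totalDeriv_ne_zero [NoZeroDivisors R] [CharZero R] {f : MvPolynomial (ι × ℕ) R}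
    (hf : f ≠ 0) (h0 : coeff 0 f = 0) : totalDeriv R ι f ≠ 0 := by
  obtain ⟨⟨a, b⟩, hab, hmax⟩ :=
    f.vars.exists_max_image Prod.snd (vars_nonempty_of_coeff_zero hf h0)
  -- `b` is the highest order occurring in `f`, so `∂/∂v_a^{(b+1)}` only sees `∂ₓ v_a^{(b)}`
  have htop : pderiv (a, b + 1) f = 0 :=
    pderiv_eq_zero_of_notMem_vars fun h => (hmax _ h).not_gt (Nat.lt_succ_self b)
  intro hD
  have hshift := pderiv_totalDeriv a b f
  rw [hD, map_zero, htop, map_zero, zero_add] at hshift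
  exact pderiv_ne_zero_of_mem_vars hab hshift.symm

end CommSemiring

end MvPolynomial

theorem map_finsum_eq_zero {α M N F : Type*} [AddCommMonoid M] [AddCommMonoid N] [FunLike F M N]
    [AddMonoidHomClass F M N] (g : F) {f : α → M} (h : ∀ i, g (f i) = 0) :
    g (∑ᶠ i, f i) = 0 := by
  by_cases hf : (Function.support f).Finite
  · rw [map_finsum g hf]
    simp [h]
  · rw [finsum_of_infinite_support hf, map_zero]

section DifferentialExpression

variable {R : Type*} [CommSemiring R]

theorem pderiv_hessianTerm_eq_zero {A : MvPolynomial (ℕ × ℕ) R} {k₀ : ℕ}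
    (hA : ∀ a, k₀ < a → ∀ b, pderiv (a, b) A = 0) (i j k l b : ℕ) :
    pderiv (k₀ + 2, b)
      (pderiv (i, j) (pderiv (k, l) A) * X (i + 1, j + 1) * X (k + 1, l + 1)) = 0 := by
  by_cases hik : k₀ < i ∨ k₀ < k
  · have hzero : pderiv (i, j) (pderiv (k, l) A) = 0 := by
      rcases hik with hi | hk
      · rw [pderiv_comm, hA i hi, map_zero]
      · rw [hA k hk, map_zero]
    simp [hzero]
  · rw [not_or, not_lt, not_lt] at hik
    have hH : pderiv (k₀ + 2, b) (pderiv (i, j) (pderiv (k, l) A)) = 0 := by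
      rw [pderiv_comm (k₀ + 2, b), pderiv_comm (k₀ + 2, b), hA _ (by omega), map_zero, map_zero]
    have hXi : pderiv (k₀ + 2, b) (X (i + 1, j + 1) : MvPolynomial (ℕ × ℕ) R) = 0 :=
      pderiv_X_of_ne (by simp; omega)
    have hXk : pderiv (k₀ + 2, b) (X (k + 1, l + 1) : MvPolynomial (ℕ × ℕ) R) = 0 :=
      pderiv_X_of_ne (by simp; omega)
    simp [hH, hXi, hXk]

theorem pderiv_hessianSum_eq_zero {A : MvPolynomial (ℕ × ℕ) R} {k₀ : ℕ}
    (hA : ∀ a, k₀ < a → ∀ b, pderiv (a, b) A = 0) (s t : Finset ℕ) (b : ℕ) :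
    pderiv (k₀ + 2, b) (∑ i ∈ s, ∑ k ∈ t, ∑ᶠ (j : ℕ), ∑ᶠ (l : ℕ),
      pderiv (i, j) (pderiv (k, l) A) * X (i + 1, j + 1) * X (k + 1, l + 1)) = 0 := by
  simp only [map_sum]
  exact Finset.sum_eq_zero fun i _ => Finset.sum_eq_zero fun k _ =>
    map_finsum_eq_zero _ fun j => map_finsum_eq_zero _ fun l =>
      pderiv_hessianTerm_eq_zero hA i j k l b

theorem pderiv_totalDerivSum_eq {A : MvPolynomial (ℕ × ℕ) R} {k₀ l₀ : ℕ}
    (hA : ∀ a, k₀ < a → ∀ b, pderiv (a, b) A = 0) {s : Finset ℕ} (hk₀ : k₀ ∈ s) :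
    pderiv (k₀ + 2, l₀ + 1) (∑ k ∈ s, ∑ᶠ (l : ℕ),
      totalDeriv R ℕ (pderiv (k, l) A) * X (k + 2, l + 1)) =
        totalDeriv R ℕ (pderiv (k₀, l₀) A) := by
  have hterm : ∀ k l,
      pderiv (k₀ + 2, l₀ + 1) (totalDeriv R ℕ (pderiv (k, l) A) * X (k + 2, l + 1)) =
        totalDeriv R ℕ (pderiv (k, l) A) * pderiv (k₀ + 2, l₀ + 1) (X (k + 2, l + 1)) := by
    intro k l
    rw [pderiv_mul, pderiv_totalDeriv, pderiv_comm (k₀ + 2, l₀ + 1), pderiv_comm (k₀ + 2, l₀),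
      hA _ (by omega), hA _ (by omega)]
    simp
  rw [map_sum, Finset.sum_eq_single k₀ _ (absurd hk₀)]
  · have hfin : (Function.support fun l =>
        totalDeriv R ℕ (pderiv (k₀, l) A) * X (k₀ + 2, l + 1)).Finite :=
      (finite_support_pderiv_mk A k₀).subset ((Function.support_mul_subset_left _ _).trans
        (Function.support_comp_subset (map_zero _) _))
    rw [map_finsum _ hfin, finsum_eq_single _ l₀ fun l hl => ?_, hterm, pderiv_X_self, mul_one]
    rw [hterm, pderiv_X_of_ne (by simpa using hl), mul_zero]
  · exact fun k _ hk => map_finsum_eq_zero _ fun l => by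
      rw [hterm, pderiv_X_of_ne (by simp [hk]), mul_zero]

end DifferentialExpression

/-- Let `A` be a nonzero polynomial in the variables `v_i^{(j)}` (`1 ≤ i ≤ N`) all of whose
monomials have total degree `≥ 2`.  Then
`C := Σ_{i,k=1}^{N} Σ_{j,l≥0} (∂²A/∂v_i^{(j)}∂v_k^{(l)}) v_{i+1}^{(j+1)} v_{k+1}^{(l+1)}
    - Σ_{k=1}^{N} Σ_{l≥0} ∂ₓ(∂A/∂v_k^{(l)}) v_{k+2}^{(l+1)}`
is nonzero. -/
theorem C_expression_nonzero (N : ℕ) (A : VRing) (hA : A ≠ 0)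
    (hsupp : A ∈ MvPolynomial.supported ℂ {p : ℕ × ℕ | 1 ≤ p.1 ∧ p.1 ≤ N})
    (hdeg : ∀ m ∈ A.support, 2 ≤ mdeg m) :
    ((∑ i ∈ Finset.Icc 1 N, ∑ k ∈ Finset.Icc 1 N, ∑ᶠ (j : ℕ), ∑ᶠ (l : ℕ),
        pderiv (i, j) (pderiv (k, l) A) * vv (i + 1) (j + 1) * vv (k + 1) (l + 1)) -
      (∑ k ∈ Finset.Icc 1 N, ∑ᶠ (l : ℕ),
        Dv (pderiv (k, l) A) * vv (k + 2) (l + 1))) ≠ 0 := by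
  have hdeg' : ∀ m ∈ A.support, 2 ≤ m.degree := hdeg
  obtain ⟨⟨k₀, l₀⟩, hmem, hmax⟩ := A.vars.exists_max_image Prod.fst
    (vars_nonempty_of_coeff_zero hA (coeff_eq_zero_of_degree_lt hdeg' (by simp)))
  have hk₀ : k₀ ∈ Finset.Icc 1 N := Finset.mem_Icc.mpr (mem_supported.mp hsupp hmem)
  have hA₀ : ∀ a, k₀ < a → ∀ b, pderiv (a, b) A = 0 := fun a ha b =>
    pderiv_eq_zero_of_notMem_vars fun h => (hmax _ h).not_gt ha
  have hconst : coeff 0 (pderiv (k₀, l₀) A) = 0 := by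
    rw [coeff_zero_pderiv, coeff_eq_zero_of_degree_lt hdeg' (by simp)]
  intro hC
  have hDv : Dv = totalDeriv ℂ ℕ := rfl
  simp only [vv, hDv] at hC
  have hderiv := congrArg (pderiv (k₀ + 2, l₀ + 1)) hC
  rw [map_sub, pderiv_hessianSum_eq_zero hA₀, pderiv_totalDerivSum_eq hA₀ hk₀, zero_sub,
    map_zero, neg_eq_zero] at hderiv
  exact totalDeriv_ne_zero (pderiv_ne_zero_of_mem_vars hmem) hconst hderiv
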